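/- arXiv:2401.03923 — 5 statements merged into one kernel-verified Lean document; each statement's English description precedes it below -/
import Mathlib

section
/- Let $Z$ be a real random variable with $\mathbb{E}[Z]=0$ satisfying the Bernstein-type moment condition $\mathbb{E}[|Z|^k]\le (Bk\log n)^k(V+n^{-2})$ for all integers $k\ge 2$, where $B>0$, $V\ge 0$, and $n\ge 2$. Then for every $\lambda$ with $0<\lambda<\tfrac{1}{2eB\log n}$, $\mathbb{E}[\exp(\lambda Z)]\le \exp\big(\tfrac{e^2\lambda^2}{2}(B\log n)^2(V+n^{-2})\big)$. -/
/-!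
As `𝔼 Z = 0`, `𝔼 e^{λZ} = 1 + 𝔼 (e^{λZ} - λZ - 1)`, and
`e^y - y - 1 ≤ e^{|y|} - |y| - 1 = ∑_{k ≥ 2} |y|^k / k!`. Integrating termwise and inserting the
moment bound gives `𝔼 e^{λZ} ≤ 1 + (V + n⁻²) ∑_{k ≥ 2} (k x)^k / k!` with `x = λ B log n`,
`e x ≤ 1/2`.
Stirling's bound `k! ≥ √(2πk) (k/e)^k` makes that series at most `e² x² / 2`, and `1 + t ≤ e^t`
concludes.
-/

open MeasureTheory ProbabilityTheory Real
open scoped Nat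

lemma exp_sub_le_exp_abs_sub_abs (y : ℝ) : exp y - y ≤ exp |y| - |y| := by
  rcases le_or_gt 0 y with hy | hy
  · rw [abs_of_nonneg hy]
  · have := sinh_le_self_iff.2 hy.le
    rw [sinh_eq, abs_of_neg hy] at *
    linarith

lemma hasSum_pow_add_two_div_factorial (y : ℝ) :
    HasSum (fun k ↦ y ^ (k + 2) / (k + 2)!) (exp y - 1 - y) := by
  have h := (hasSum_nat_add_iff' 2).2 (NormedSpace.expSeries_div_hasSum_exp y)
  simpa [← exp_eq_exp_ℝ, Finset.sum_range_succ, sub_sub] using h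

lemma natCast_mul_pow_div_factorial_le {x : ℝ} (hx : 0 ≤ x) (k : ℕ) :
    ((k : ℝ) * x) ^ k / k ! ≤ (exp 1 * x) ^ k := by
  have := pow_div_factorial_le_exp (k : ℝ) k.cast_nonneg k
  calc ((k : ℝ) * x) ^ k / k ! = (k : ℝ) ^ k / k ! * x ^ k := by ring
    _ ≤ exp k * x ^ k := by gcongr
    _ = (exp 1 * x) ^ k := by rw [mul_pow, ← exp_nat_mul, mul_one]

lemma natCast_mul_pow_div_factorial_le_div {x c : ℝ} {k : ℕ} (hx : 0 ≤ x) (hc : 0 < c)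
    (hck : c ^ 2 ≤ 2 * π * k) : ((k : ℝ) * x) ^ k / k ! ≤ (exp 1 * x) ^ k / c := by
  have hk : (0 : ℝ) < k := by
    by_contra! h
    nlinarith [pi_pos, sq_pos_of_pos hc, h.antisymm k.cast_nonneg]
  have hstirling : c * (k / exp 1) ^ k ≤ k ! :=
    le_trans (by gcongr; exact (le_sqrt hc.le (by positivity)).2 hck)
      (Stirling.le_factorial_stirling k)
  rw [div_le_div_iff₀ (by positivity) hc]
  calc ((k : ℝ) * x) ^ k * c = (exp 1 * x) ^ k * (c * (k / exp 1) ^ k) := by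
        rw [mul_left_comm, ← mul_pow]
        field_simp
    _ ≤ (exp 1 * x) ^ k * k ! := by gcongr

lemma summable_natCast_mul_pow_div_factorial {x : ℝ} (hx : 0 ≤ x) (hex : exp 1 * x < 1) :
    Summable fun k : ℕ ↦ ((k : ℝ) * x) ^ k / k ! :=
  (summable_geometric_of_lt_one (by positivity) hex).of_nonneg_of_le (fun _ ↦ by positivity)
    (natCast_mul_pow_div_factorial_le hx)

lemma tsum_natCast_mul_pow_div_factorial_le {x : ℝ} (hx : 0 ≤ x) (hex : exp 1 * x ≤ 1 / 2) :
    ∑' k : ℕ, (((k + 2 : ℕ) : ℝ) * x) ^ (k + 2) / (k + 2)! ≤ exp 1 ^ 2 * x ^ 2 / 2 := by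
  set t := exp 1 * x
  have ht : 0 ≤ t := by positivity
  have hpi := pi_gt_d2
  -- The terms `k = 2, 3` are kept apart: `1/3.54 + 1/8.6 + 1/10 < 1/2`, while one geometric
  -- bound from `k = 2` on would give `1/√π > 1/2`.
  set u : ℕ → ℝ := fun k ↦ (((k + 2 : ℕ) : ℝ) * x) ^ (k + 2) / (k + 2)!
  have hu : Summable u :=
    (summable_nat_add_iff 2).2 (summable_natCast_mul_pow_div_factorial hx (by linarith))
  have hu0 : u 0 ≤ t ^ 2 / 3.54 :=
    natCast_mul_pow_div_factorial_le_div hx (by norm_num) (by norm_num; linarith)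
  have hu1 : u 1 ≤ t ^ 2 / 8.6 :=
    calc u 1 ≤ t ^ 3 / 4.3 :=
          natCast_mul_pow_div_factorial_le_div hx (by norm_num) (by norm_num; linarith)
      _ ≤ t ^ 2 / 8.6 := by
          have := mul_le_mul_of_nonneg_left hex (sq_nonneg t)
          rw [pow_succ]
          norm_num at this ⊢
          linarith
  have htail (j : ℕ) : u (j + 2) ≤ t ^ 2 / 20 * (1 / 2) ^ j :=
    calc u (j + 2) ≤ t ^ (j + 4) / 5 := by
          refine natCast_mul_pow_div_factorial_le_div hx (by norm_num) ?_
          push_cast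
          nlinarith [(j.cast_nonneg : (0 : ℝ) ≤ j)]
      _ = t ^ 2 * t ^ 2 * t ^ j / 5 := by ring
      _ ≤ t ^ 2 * (1 / 2) ^ 2 * (1 / 2) ^ j / 5 := by gcongr
      _ = t ^ 2 / 20 * (1 / 2) ^ j := by ring
  have hsum_tail : ∑' j, u (j + 2) ≤ t ^ 2 / 10 := by
    calc ∑' j, u (j + 2) ≤ ∑' j : ℕ, t ^ 2 / 20 * (1 / 2) ^ j :=
          ((summable_nat_add_iff 2).2 hu).tsum_le_tsum htail
            (summable_geometric_two.mul_left _)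
      _ = t ^ 2 / 10 := by rw [tsum_mul_left, tsum_geometric_two]; ring
  rw [← hu.sum_add_tsum_nat_add 2, Finset.sum_range_succ, Finset.sum_range_one,
    show exp 1 ^ 2 * x ^ 2 = t ^ 2 by ring]
  norm_num at hu0 hu1 ⊢
  nlinarith [sq_nonneg t]

section Integral

variable {α : Type*} [MeasurableSpace α] {μ : Measure α}

lemma integral_le_tsum_integral_of_le_tsum {g : α → ℝ} {F : ℕ → α → ℝ} (hg : ∀ a, 0 ≤ g a)
    (hF : ∀ k a, 0 ≤ F k a) (hF_int : ∀ k, Integrable (F k) μ)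
    (hF_sum : Summable fun k ↦ ∫ a, F k a ∂μ) (hF_summable : ∀ a, Summable fun k ↦ F k a)
    (hgF : ∀ a, g a ≤ ∑' k, F k a) :
    ∫ a, g a ∂μ ≤ ∑' k, ∫ a, F k a ∂μ := by
  have hF_int_nonneg (k : ℕ) : 0 ≤ ∫ a, F k a ∂μ := integral_nonneg (hF k)
  by_cases hg_int : Integrable g μ
  swap
  · rw [integral_undef hg_int]
    exact tsum_nonneg hF_int_nonneg
  rw [integral_eq_lintegral_of_nonneg_ae (ae_of_all _ hg) hg_int.1]
  refine ENNReal.toReal_le_of_le_ofReal (tsum_nonneg hF_int_nonneg) ?_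
  calc ∫⁻ a, ENNReal.ofReal (g a) ∂μ ≤ ∫⁻ a, ∑' k, ENNReal.ofReal (F k a) ∂μ := by
        refine lintegral_mono fun a ↦ ?_
        rw [← ENNReal.ofReal_tsum_of_nonneg (hF · a) (hF_summable a)]
        exact ENNReal.ofReal_le_ofReal (hgF a)
    _ = ∑' k, ∫⁻ a, ENNReal.ofReal (F k a) ∂μ :=
        lintegral_tsum fun k ↦ (hF_int k).aemeasurable.ennreal_ofReal
    _ = ENNReal.ofReal (∑' k, ∫ a, F k a ∂μ) := by
        rw [ENNReal.ofReal_tsum_of_nonneg hF_int_nonneg hF_sum]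
        refine tsum_congr fun k ↦ ?_
        exact (ofReal_integral_eq_lintegral_ofReal (hF_int k) (ae_of_all _ (hF k))).symm

lemma integral_exp_le_one_add_tsum [IsProbabilityMeasure μ] {X : α → ℝ} (hX : ∫ ω, X ω ∂μ = 0)
    (hX_int : ∀ k, Integrable (fun ω ↦ |X ω| ^ (k + 2)) μ)
    (hX_sum : Summable fun k ↦ (∫ ω, |X ω| ^ (k + 2) ∂μ) / (k + 2)!) :
    ∫ ω, exp (X ω) ∂μ ≤ 1 + ∑' k, (∫ ω, |X ω| ^ (k + 2) ∂μ) / (k + 2)! := by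
  have hmom_nonneg (k : ℕ) : 0 ≤ (∫ ω, |X ω| ^ (k + 2) ∂μ) / (k + 2)! :=
    div_nonneg (integral_nonneg fun _ ↦ by positivity) (by positivity)
  by_cases hexp : Integrable (fun ω ↦ exp (X ω)) μ
  swap
  · rw [integral_undef hexp]
    exact add_nonneg zero_le_one (tsum_nonneg hmom_nonneg)
  have hX_meas : AEMeasurable X μ :=
    aemeasurable_of_integrable_exp_mul zero_ne_one (by simp) (by simpa using hexp)
  have hX_integrable : Integrable X μ := by
    refine ((memLp_two_iff_integrable_sq hX_meas.aestronglyMeasurable).2 ?_).integrable one_le_two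
    simpa [sq_abs] using hX_int 0
  have hsplit : ∫ ω, exp (X ω) ∂μ = 1 + ∫ ω, (exp (X ω) - X ω - 1) ∂μ := by
    have hexp_sub : Integrable (fun ω ↦ exp (X ω) - X ω) μ := hexp.sub hX_integrable
    rw [integral_sub hexp_sub (integrable_const 1), integral_sub hexp hX_integrable, hX]
    simp
  simp_rw [hsplit, ← integral_div]
  gcongr
  refine integral_le_tsum_integral_of_le_tsum (fun ω ↦ ?_) (fun k ω ↦ by positivity)
    (fun k ↦ (hX_int k).div_const _) (by simpa only [integral_div] using hX_sum)
    (fun ω ↦ (hasSum_pow_add_two_div_factorial |X ω|).summable) (fun ω ↦ ?_)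
  · linarith [add_one_le_exp (X ω)]
  · rw [(hasSum_pow_add_two_div_factorial |X ω|).tsum_eq]
    linarith [exp_sub_le_exp_abs_sub_abs (X ω)]

lemma integral_exp_le_of_abs_moment_le [IsProbabilityMeasure μ] {X : α → ℝ} {a M : ℝ}
    (hX : ∫ ω, X ω ∂μ = 0) (ha : 0 ≤ a) (hea : exp 1 * a ≤ 1 / 2) (hM : 0 ≤ M)
    (hmom : ∀ k : ℕ, 2 ≤ k →
      Integrable (fun ω ↦ |X ω| ^ k) μ ∧ ∫ ω, |X ω| ^ k ∂μ ≤ ((k : ℝ) * a) ^ k * M) :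
    ∫ ω, exp (X ω) ∂μ ≤ exp (M * (exp 1 ^ 2 * a ^ 2 / 2)) := by
  have hmom_le (k : ℕ) : (∫ ω, |X ω| ^ (k + 2) ∂μ) / (k + 2)! ≤
      M * ((((k + 2 : ℕ) : ℝ) * a) ^ (k + 2) / (k + 2)!) := by
    rw [mul_div_assoc', mul_comm M]
    gcongr
    exact (hmom (k + 2) (by omega)).2
  have hsum := ((summable_nat_add_iff 2).2
    (summable_natCast_mul_pow_div_factorial ha (by linarith))).mul_left M
  have hmom_sum := hsum.of_nonneg_of_le (fun k ↦ by positivity) hmom_le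
  calc ∫ ω, exp (X ω) ∂μ ≤ 1 + ∑' k, (∫ ω, |X ω| ^ (k + 2) ∂μ) / (k + 2)! :=
        integral_exp_le_one_add_tsum hX (fun k ↦ (hmom (k + 2) (by omega)).1) hmom_sum
    _ ≤ 1 + M * (exp 1 ^ 2 * a ^ 2 / 2) := by
        grw [hmom_sum.tsum_le_tsum hmom_le hsum, tsum_mul_left,
          tsum_natCast_mul_pow_div_factorial_le ha hea]
    _ ≤ exp (M * (exp 1 ^ 2 * a ^ 2 / 2)) := by
        linarith [add_one_le_exp (M * (exp 1 ^ 2 * a ^ 2 / 2))]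

end Integral

theorem stmt1_general (Ω : Type) [MeasurableSpace Ω] (P : Measure Ω) [IsProbabilityMeasure P]
    (Z : Ω → ℝ) (B V : ℝ) (n : ℕ) (hV : 0 ≤ V)
    (hmean : ∫ ω, Z ω ∂P = 0)
    (hmom : ∀ k : ℕ, 2 ≤ k →
      Integrable (fun ω => |Z ω| ^ k) P ∧
        ∫ ω, |Z ω| ^ k ∂P ≤ (B * k * Real.log n) ^ k * (V + ((n : ℝ) ^ 2)⁻¹)) :
    ∀ l : ℝ, 0 < l → l < 1 / (2 * Real.exp 1 * B * Real.log n) →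
      ∫ ω, Real.exp (l * Z ω) ∂P ≤
        Real.exp (Real.exp 1 ^ 2 * l ^ 2 / 2 * (B * Real.log n) ^ 2 * (V + ((n : ℝ) ^ 2)⁻¹)) := by
  intro l hl hlB
  have hD : 0 < 2 * exp 1 * (B * log n) := by
    simpa only [mul_assoc] using one_div_pos.1 (hl.trans hlB)
  have ha : 0 ≤ l * (B * log n) := mul_nonneg hl.le (pos_of_mul_pos_right hD (by positivity)).le
  have hea : exp 1 * (l * (B * log n)) ≤ 1 / 2 := by
    rw [lt_div_iff₀ (by simpa only [mul_assoc] using hD)] at hlB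
    linarith
  have hmom_l (k : ℕ) (hk : 2 ≤ k) : Integrable (fun ω ↦ |l * Z ω| ^ k) P ∧
      ∫ ω, |l * Z ω| ^ k ∂P ≤ ((k : ℝ) * (l * (B * log n))) ^ k * (V + ((n : ℝ) ^ 2)⁻¹) := by
    simp only [abs_mul, mul_pow, integral_const_mul, abs_of_pos hl]
    refine ⟨(hmom k hk).1.const_mul _, ?_⟩
    calc l ^ k * ∫ ω, |Z ω| ^ k ∂P ≤ l ^ k * ((B * k * log n) ^ k * (V + ((n : ℝ) ^ 2)⁻¹)) := by
          gcongr
          exact (hmom k hk).2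
      _ = _ := by ring
  have h := integral_exp_le_of_abs_moment_le (by rw [integral_const_mul, hmean, mul_zero]) ha hea
    (by positivity) hmom_l
  convert h using 2
  ring

/-- From a Bernstein-type moment condition, a bound on the moment generating function. -/
theorem stmt1 (Ω : Type) [MeasurableSpace Ω] (P : Measure Ω) [IsProbabilityMeasure P]
    (Z : Ω → ℝ) (B V : ℝ) (n : ℕ) (hB : 0 < B) (hV : 0 ≤ V) (hn : 2 ≤ n)
    (hmean : ∫ ω, Z ω ∂P = 0)
    (hmom : ∀ k : ℕ, 2 ≤ k →
      Integrable (fun ω => |Z ω| ^ k) P ∧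
        ∫ ω, |Z ω| ^ k ∂P ≤ (B * k * Real.log n) ^ k * (V + ((n : ℝ) ^ 2)⁻¹)) :
    ∀ l : ℝ, 0 < l → l < 1 / (2 * Real.exp 1 * B * Real.log n) →
      ∫ ω, Real.exp (l * Z ω) ∂P ≤
        Real.exp (Real.exp 1 ^ 2 * l ^ 2 / 2 * (B * Real.log n) ^ 2 * (V + ((n : ℝ) ^ 2)⁻¹)) :=
  stmt1_general Ω P Z B V n hV hmean hmom
end

section
/- For every real $x$ with $0 < x \le \tfrac{1}{2e}$, one has $\sum_{k=2}^{\infty} \frac{(kx)^k}{k!} \le \frac{e^2 x^2}{2}$. -/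
/-!
Put `y = e x ≤ 1/2`. Stirling's bound `k! ≥ √(2πk) (k/e)^k` gives `(kx)^k / k! ≤ y^k / √(2πk)`,
which is at most `y^k / 5` once `k ≥ 4`; so the terms with `k ≥ 4` are dominated by a geometric
series of sum at most `2y⁴/5 ≤ y²/10`. The terms `k = 2, 3` are `2x² + 9x³/2`, and
`2 + 9x/2 ≤ 2e²/5` because `x ≤ 1/(2e)`.
-/

open Real Nat

theorem pow_mul_div_factorial_le {n : ℕ} (hn : n ≠ 0) {x : ℝ} (hx : 0 ≤ x) :
    ((n : ℝ) * x) ^ n / n ! ≤ (exp 1 * x) ^ n / √(2 * π * n) := by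
  calc ((n : ℝ) * x) ^ n / n ! ≤ ((n : ℝ) * x) ^ n / (√(2 * π * n) * (n / exp 1) ^ n) :=
        div_le_div_of_nonneg_left (by positivity) (by positivity) (Stirling.le_factorial_stirling n)
    _ = (exp 1 * x) ^ n / √(2 * π * n) := by
        rw [div_pow, mul_pow, mul_pow]
        field_simp

theorem pow_mul_div_factorial_le_of_four_le {n : ℕ} (hn : 4 ≤ n) {x : ℝ} (hx : 0 ≤ x) :
    ((n : ℝ) * x) ^ n / n ! ≤ (exp 1 * x) ^ n / 5 := by
  have h25 : (25 : ℝ) ≤ 2 * π * n := by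
    have : (4 : ℝ) ≤ n := by exact_mod_cast hn
    nlinarith [pi_gt_d2]
  have h5 : (5 : ℝ) ≤ √(2 * π * n) := Real.le_sqrt_of_sq_le (by linarith)
  calc ((n : ℝ) * x) ^ n / n ! ≤ (exp 1 * x) ^ n / √(2 * π * n) :=
        pow_mul_div_factorial_le (by omega) hx
    _ ≤ (exp 1 * x) ^ n / 5 := div_le_div_of_nonneg_left (by positivity) (by norm_num) h5

theorem tsum_pow_mul_div_factorial_add_four_le {x : ℝ} (hx : 0 ≤ x) (hex : exp 1 * x < 1) :
    Summable (fun k : ℕ => (((k + 4 : ℕ) : ℝ) * x) ^ (k + 4) / (k + 4)!) ∧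
      ∑' k : ℕ, (((k + 4 : ℕ) : ℝ) * x) ^ (k + 4) / (k + 4)!
        ≤ (exp 1 * x) ^ 4 / (5 * (1 - exp 1 * x)) := by
  set y := exp 1 * x
  have hy : 0 ≤ y := by positivity
  have hgeom := summable_geometric_of_lt_one hy hex
  have hle : ∀ k : ℕ, (((k + 4 : ℕ) : ℝ) * x) ^ (k + 4) / (k + 4)! ≤ y ^ 4 / 5 * y ^ k := by
    intro k
    calc _ ≤ y ^ (k + 4) / 5 := pow_mul_div_factorial_le_of_four_le (by omega) hx
      _ = y ^ 4 / 5 * y ^ k := by ring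
  have hsum : Summable (fun k : ℕ => (((k + 4 : ℕ) : ℝ) * x) ^ (k + 4) / (k + 4)!) :=
    (hgeom.mul_left _).of_nonneg_of_le (fun k => by positivity) hle
  refine ⟨hsum, ?_⟩
  calc _ ≤ ∑' k : ℕ, y ^ 4 / 5 * y ^ k := hsum.tsum_le_tsum hle (hgeom.mul_left _)
    _ = y ^ 4 / (5 * (1 - y)) := by
        rw [tsum_mul_left, tsum_geometric_of_lt_one hy hex]
        field_simp

/-- For `0 < x ≤ 1/(2e)`, the series `∑_{k ≥ 2} (k x)^k / k!` is at most `e² x² / 2`. -/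
theorem stmt2 (x : ℝ) (hx : 0 < x) (hx' : x ≤ 1 / (2 * Real.exp 1)) :
    ∑' k : ℕ, (((k + 2 : ℕ) : ℝ) * x) ^ (k + 2) / ((k + 2).factorial : ℝ)
      ≤ Real.exp 1 ^ 2 * x ^ 2 / 2 := by
  set f : ℕ → ℝ := fun k => (((k + 2 : ℕ) : ℝ) * x) ^ (k + 2) / ((k + 2).factorial : ℝ)
  have he : 2.718 < exp 1 := lt_trans (by norm_num) exp_one_gt_d9
  have hex : exp 1 * x ≤ 1 / 2 := by
    rw [le_div_iff₀ (by positivity)] at hx'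
    linarith
  obtain ⟨hsum, htail⟩ := tsum_pow_mul_div_factorial_add_four_le hx.le (by linarith)
  have hf : Summable f := (summable_nat_add_iff 2).mp hsum
  rw [← hf.sum_add_tsum_nat_add 2, Finset.sum_range_succ, Finset.sum_range_one]
  have hf0 : f 0 = 2 * x ^ 2 := by norm_num [f, Nat.factorial]; ring
  have hf1 : f 1 = 9 / 2 * x ^ 3 := by norm_num [f, Nat.factorial]; ring
  have htail_small : (exp 1 * x) ^ 4 / (5 * (1 - exp 1 * x)) ≤ exp 1 ^ 2 * x ^ 2 / 10 := by
    rw [← mul_pow]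
    have hy : 0 ≤ exp 1 * x := by positivity
    rw [div_le_div_iff₀ (by linarith) (by norm_num)]
    nlinarith [pow_nonneg hy 2, pow_nonneg hy 3, mul_le_mul hex hex hy (by norm_num)]
  have hcoef : 2 + 9 / 2 * x ≤ 2 / 5 * exp 1 ^ 2 := by nlinarith
  rw [hf0, hf1]
  change ∑' k, f (k + 2) ≤ _ at htail
  nlinarith [mul_le_mul_of_nonneg_left hcoef (sq_nonneg x)]
end

section
/- Fix $\lambda>0$ and let $\psi(z;\lambda)=\min\{\max\{z,-\lambda\},\lambda\}$. For every fixed real $u$, the map $b\mapsto b^2\,\psi\big(\tfrac{u}{1+b};\lambda\big)^2$ is nondecreasing on $(0,\infty)$. -/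
/-! For `b > 0` one has `b |ψ(u/(1+b); λ)| = min (|u| b/(1+b)) (λ b)`, a minimum of two
nondecreasing nonnegative functions of `b`; squaring preserves the monotonicity. -/

/-- The clipping function `ψ(z; lam) = min (max z (-lam)) lam`. -/
def clip (lam z : ℝ) : ℝ := min (max z (-lam)) lam

lemma abs_clip {lam : ℝ} (hlam : 0 ≤ lam) (z : ℝ) : |clip lam z| = min |z| lam := by
  unfold clip
  grind [abs_of_nonneg, abs_of_nonpos]

lemma mul_abs_clip_div_one_add {lam : ℝ} (hlam : 0 ≤ lam) (u : ℝ) {b : ℝ} (hb : 0 < b) :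
    b * |clip lam (u / (1 + b))| = min (|u| * (b / (1 + b))) (lam * b) := by
  rw [abs_clip hlam, abs_div, abs_of_pos (by linarith : (0 : ℝ) < 1 + b),
    mul_min_of_nonneg _ _ hb.le, mul_div_left_comm, mul_comm b lam]

lemma monotoneOn_div_one_add : MonotoneOn (fun b : ℝ => b / (1 + b)) (Set.Ioi (-1)) := by
  intro a ha b hb hab
  simp only [Set.mem_Ioi] at ha hb
  rw [div_le_div_iff₀ (by linarith) (by linarith)]
  linarith

lemma monotoneOn_mul_abs_clip_div_one_add {lam : ℝ} (hlam : 0 ≤ lam) (u : ℝ) :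
    MonotoneOn (fun b : ℝ => b * |clip lam (u / (1 + b))|) (Set.Ioi 0) := by
  refine MonotoneOn.congr ?_ fun b hb ↦ (mul_abs_clip_div_one_add hlam u hb).symm
  refine MonotoneOn.min ?_ ((monotone_id.const_mul hlam).monotoneOn _)
  intro a ha b hb hab
  have hsub : Set.Ioi (0 : ℝ) ⊆ Set.Ioi (-1) := Set.Ioi_subset_Ioi (by norm_num)
  exact mul_le_mul_of_nonneg_left (monotoneOn_div_one_add (hsub ha) (hsub hb) hab) (abs_nonneg u)

/-- For fixed `u`, the map `b ↦ b² ψ(u/(1+b); λ)²` is nondecreasing on `(0, ∞)`. -/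
theorem stmt9 (lam u : ℝ) (hlam : 0 < lam) :
    MonotoneOn (fun b : ℝ => b ^ 2 * (clip lam (u / (1 + b))) ^ 2) (Set.Ioi (0 : ℝ)) := by
  intro a ha b hb hab
  have hmono := monotoneOn_mul_abs_clip_div_one_add hlam.le u ha hb hab
  have hnonneg : 0 ≤ a * |clip lam (u / (1 + a))| := mul_nonneg (le_of_lt ha) (abs_nonneg _)
  simpa only [mul_pow, sq_abs] using pow_le_pow_left₀ hnonneg hmono 2
end

section
/- Let $G\sim\mathcal{N}(0,1)$ and $\omega\ge 0$. Then for every real $\theta$, $\mathbb{E}\big[(\omega - G\,\mathrm{sign}(\theta+G))\,\mathbf{1}(|\theta+G|>\omega)\big] \ge \tfrac{1}{\sqrt{2\pi}} e^{-\omega^2/2}\Big[\omega^2\Big(1-\big(\tfrac{\theta^2}{2}+1\big)e^{-\theta^2/2}\Big) - 2\Big]$. -/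
/-!
With `φ` the standard normal density and `Q(a) = ∫_a^∞ φ`, the identity `∫_a^∞ x φ = φ(a)` gives
the expectation in closed form, `f(θ) = (ω Q(ω-θ) - φ(ω-θ)) + (ω Q(ω+θ) - φ(ω+θ))`, which is even
in `θ`. Since `Q' = -φ` and `φ' = -xφ`, one gets `f'(t) = t (φ(ω-t) + φ(ω+t))`, and writing
`φ(ω ∓ t) = φ(ω) e^{-t²/2} e^{±ωt}` with `e^{ωt} ≥ (ωt)²/2` bounds this below by
`φ(ω) ω² (t³/2) e^{-t²/2}`, the derivative of `φ(ω) ω² (1 - (t²/2 + 1) e^{-t²/2})`.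
Integrating from `0` and using `f(0) = 2ω Q(ω) - 2φ(ω) ≥ -2φ(ω)` gives the bound.
-/

open MeasureTheory ProbabilityTheory Real Set Filter

noncomputable def stdGaussianPDF (x : ℝ) : ℝ := (√(2 * π))⁻¹ * exp (-x ^ 2 / 2)

noncomputable def stdGaussianTail (a : ℝ) : ℝ := ∫ x in Ioi a, stdGaussianPDF x

lemma stdGaussianPDF_pos (x : ℝ) : 0 < stdGaussianPDF x := by
  unfold stdGaussianPDF; positivity

lemma stdGaussianPDF_neg (x : ℝ) : stdGaussianPDF (-x) = stdGaussianPDF x := by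
  simp [stdGaussianPDF]

lemma gaussianPDFReal_zero_one : gaussianPDFReal 0 1 = stdGaussianPDF := by
  ext x; simp [gaussianPDFReal, stdGaussianPDF]

lemma stdGaussianPDF_sub (ω t : ℝ) :
    stdGaussianPDF (ω - t) = stdGaussianPDF ω * exp (-t ^ 2 / 2) * exp (ω * t) := by
  simp only [stdGaussianPDF, mul_assoc, ← exp_add]
  ring_nf

lemma continuous_stdGaussianPDF : Continuous stdGaussianPDF := by
  unfold stdGaussianPDF; fun_prop

lemma hasDerivAt_neg_sq_div_two (x : ℝ) : HasDerivAt (fun t : ℝ => -t ^ 2 / 2) (-x) x :=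
  ((hasDerivAt_pow 2 x).neg.div_const 2).congr_deriv (by push_cast; ring)

lemma hasDerivAt_stdGaussianPDF (x : ℝ) :
    HasDerivAt stdGaussianPDF (-x * stdGaussianPDF x) x :=
  ((hasDerivAt_neg_sq_div_two x).exp.const_mul (√(2 * π))⁻¹).congr_deriv
    (by simp only [stdGaussianPDF]; ring)

lemma integrable_stdGaussianPDF : Integrable stdGaussianPDF := by
  simpa [← gaussianPDFReal_zero_one] using integrable_gaussianPDFReal 0 1

lemma integrable_mul_stdGaussianPDF : Integrable fun x => x * stdGaussianPDF x := by
  refine ((integrable_mul_exp_neg_mul_sq (by norm_num : (0:ℝ) < 1 / 2)).const_mul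
    (√(2 * π))⁻¹).congr (.of_forall fun x => ?_)
  simp only [stdGaussianPDF]; ring_nf

lemma tendsto_stdGaussianPDF_atTop : Tendsto stdGaussianPDF atTop (nhds 0) := by
  have h : Tendsto (fun x : ℝ => -x ^ 2 / 2) atTop atBot :=
    (tendsto_neg_atTop_atBot.comp (tendsto_pow_atTop two_ne_zero)).atBot_div_const two_pos
  exact mul_zero (√(2 * π))⁻¹ ▸ (tendsto_exp_atBot.comp h).const_mul (√(2 * π))⁻¹

lemma integral_Ioi_mul_stdGaussianPDF (a : ℝ) :
    ∫ x in Ioi a, x * stdGaussianPDF x = stdGaussianPDF a := by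
  have h := integral_Ioi_of_hasDerivAt_of_tendsto' (a := a) (m := 0)
    (f := fun x => -stdGaussianPDF x)
    (fun x _ => (hasDerivAt_stdGaussianPDF x).neg.congr_deriv (by ring))
    integrable_mul_stdGaussianPDF.integrableOn (by simpa using tendsto_stdGaussianPDF_atTop.neg)
  simpa using h

lemma integral_Ioi_sub_mul_stdGaussianPDF (ω a : ℝ) :
    ∫ x in Ioi a, (ω - x) * stdGaussianPDF x = ω * stdGaussianTail a - stdGaussianPDF a := by
  simp_rw [sub_mul]
  rw [integral_sub (integrable_stdGaussianPDF.const_mul ω).integrableOn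
    integrable_mul_stdGaussianPDF.integrableOn, integral_const_mul,
    integral_Ioi_mul_stdGaussianPDF, stdGaussianTail]

lemma hasDerivAt_stdGaussianTail (a : ℝ) :
    HasDerivAt stdGaussianTail (-stdGaussianPDF a) a := by
  have hFTC : HasDerivAt (fun u => ∫ x in a..u, stdGaussianPDF x) (stdGaussianPDF a) a :=
    intervalIntegral.integral_hasDerivAt_right integrable_stdGaussianPDF.intervalIntegrable
      (continuous_stdGaussianPDF.stronglyMeasurableAtFilter _ _)
      continuous_stdGaussianPDF.continuousAt
  refine (hFTC.const_sub (stdGaussianTail a)).congr_of_eventuallyEq (.of_forall fun u => ?_)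
  dsimp only
  rw [← intervalIntegral.integral_Ioi_sub_Ioi' integrable_stdGaussianPDF.integrableOn
    integrable_stdGaussianPDF.integrableOn]
  simp [stdGaussianTail]

lemma hasDerivAt_mul_stdGaussianTail_sub (ω a : ℝ) :
    HasDerivAt (fun a => ω * stdGaussianTail a - stdGaussianPDF a)
      ((a - ω) * stdGaussianPDF a) a :=
  ((hasDerivAt_stdGaussianTail a).const_mul ω).sub (hasDerivAt_stdGaussianPDF a)
    |>.congr_deriv (by ring)

lemma setIntegral_gaussianReal_zero_one {s : Set ℝ} (hs : MeasurableSet s) (f : ℝ → ℝ) :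
    ∫ x in s, f x ∂gaussianReal 0 1 = ∫ x in s, stdGaussianPDF x * f x := by
  rw [← integral_indicator hs, integral_gaussianReal_eq_integral_smul one_ne_zero,
    ← integral_indicator hs, gaussianPDFReal_zero_one]
  congr 1; ext x
  by_cases hx : x ∈ s <;> simp [hx]

lemma integrable_sub_mul_stdGaussianPDF (ω : ℝ) :
    Integrable fun x => (ω - x) * stdGaussianPDF x := by
  simp_rw [sub_mul]
  exact (integrable_stdGaussianPDF.const_mul ω).sub integrable_mul_stdGaussianPDF

lemma setOf_lt_abs_add_eq {ω : ℝ} (θ : ℝ) :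
    {x : ℝ | ω < |θ + x|} = Iio (-ω - θ) ∪ Ioi (ω - θ) := by
  ext x
  simp only [mem_ofPred_eq, mem_union, mem_Iio, mem_Ioi, lt_abs]
  constructor <;> rintro (h | h) <;> [right; left; right; left] <;> linarith

lemma setIntegral_lt_abs_add_eq {ω : ℝ} (hω : 0 ≤ ω) (θ : ℝ) :
    ∫ x in {x : ℝ | ω < |θ + x|}, (ω - x * Real.sign (θ + x)) ∂(gaussianReal 0 1)
      = (ω * stdGaussianTail (ω - θ) - stdGaussianPDF (ω - θ))
        + (ω * stdGaussianTail (ω + θ) - stdGaussianPDF (ω + θ)) := by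
  set g : ℝ → ℝ := fun x => (ω - x) * stdGaussianPDF x
  set integrand : ℝ → ℝ := fun x => stdGaussianPDF x * (ω - x * Real.sign (θ + x))
  have hg : Integrable g := integrable_sub_mul_stdGaussianPDF ω
  have hleft : EqOn (fun x => g (-x)) integrand (Iio (-ω - θ)) := fun x hx => by
    have : θ + x < 0 := by simp only [mem_Iio] at hx; linarith
    simp [g, integrand, Real.sign_of_neg this, stdGaussianPDF_neg]; ring
  have hright : EqOn g integrand (Ioi (ω - θ)) := fun x hx => by
    have : 0 < θ + x := by simp only [mem_Ioi] at hx; linarith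
    simp [g, integrand, Real.sign_of_pos this]; ring
  have hdisj : Disjoint (Iio (-ω - θ)) (Ioi (ω - θ)) :=
    (Iic_disjoint_Ioi (by linarith)).mono_left Iio_subset_Iic_self
  -- on `Iio (-ω - θ)` the substitution `x ↦ -x` turns the integrand into `g` on `Ioi (ω + θ)`
  rw [setIntegral_gaussianReal_zero_one ((setOf_lt_abs_add_eq θ).symm ▸
      measurableSet_Iio.union measurableSet_Ioi), setOf_lt_abs_add_eq,
    setIntegral_union hdisj measurableSet_Ioi
      (hg.comp_neg.integrableOn.congr_fun hleft measurableSet_Iio)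
      (hg.integrableOn.congr_fun hright measurableSet_Ioi),
    ← setIntegral_congr_fun measurableSet_Iio hleft,
    ← setIntegral_congr_fun measurableSet_Ioi hright,
    ← integral_Iic_eq_integral_Iio, integral_comp_neg_Iic, neg_sub', neg_neg,
    integral_Ioi_sub_mul_stdGaussianPDF, integral_Ioi_sub_mul_stdGaussianPDF, sub_neg_eq_add,
    add_comm]

lemma sub_le_sub_of_hasDerivAt_le {f g f' g' : ℝ → ℝ} {a b : ℝ} (hab : a ≤ b)
    (hf : ∀ x, HasDerivAt f (f' x) x) (hg : ∀ x, HasDerivAt g (g' x) x)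
    (hle : ∀ x ∈ Ioo a b, g' x ≤ f' x) : g b - g a ≤ f b - f a := by
  have hfg : ∀ x, HasDerivAt (f - g) (f' x - g' x) x := fun x => (hf x).sub (hg x)
  have hmono : MonotoneOn (f - g) (Icc a b) :=
    monotoneOn_of_hasDerivWithinAt_nonneg (convex_Icc a b)
      (fun x _ => (hfg x).continuousAt.continuousWithinAt)
      (fun x _ => (hfg x).hasDerivWithinAt)
      (fun x hx => sub_nonneg.mpr (hle x (by rwa [interior_Icc] at hx)))
  have := hmono (left_mem_Icc.mpr hab) (right_mem_Icc.mpr hab) hab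
  simp only [Pi.sub_apply] at this
  linarith

-- `e^{ωt} ≥ (ωt)²/2` for `ωt ≥ 0`, and the term `e^{-ωt}` is dropped.
lemma stdGaussianPDF_mul_le_stdGaussianPDF_sub_add {ω t : ℝ} (hωt : 0 ≤ ω * t) :
    stdGaussianPDF ω * (ω ^ 2 * t ^ 2 / 2 * exp (-t ^ 2 / 2))
      ≤ stdGaussianPDF (ω - t) + stdGaussianPDF (ω + t) := by
  have hquad : (ω * t) ^ 2 / 2 ≤ exp (ω * t) := by
    nlinarith [quadratic_le_exp_of_nonneg hωt]
  have hpos : 0 < stdGaussianPDF ω * exp (-t ^ 2 / 2) :=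
    mul_pos (stdGaussianPDF_pos ω) (exp_pos _)
  rw [stdGaussianPDF_sub, ← sub_neg_eq_add ω, stdGaussianPDF_sub, neg_sq]
  nlinarith [exp_pos (ω * -t)]

lemma hasDerivAt_one_sub_mul_exp_neg_sq (t : ℝ) :
    HasDerivAt (fun t : ℝ => 1 - (t ^ 2 / 2 + 1) * exp (-t ^ 2 / 2))
      (t ^ 2 / 2 * exp (-t ^ 2 / 2) * t) t := by
  have hpoly : HasDerivAt (fun t : ℝ => t ^ 2 / 2 + 1) t t :=
    (((hasDerivAt_pow 2 t).div_const 2).add_const 1).congr_deriv (by push_cast; ring)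
  exact ((hpoly.mul (hasDerivAt_neg_sq_div_two t).exp).const_sub 1).congr_deriv (by ring)

lemma stdGaussianPDF_mul_le_tail_sum {ω : ℝ} (hω : 0 ≤ ω) (θ : ℝ) :
    stdGaussianPDF ω * (ω ^ 2 * (1 - (θ ^ 2 / 2 + 1) * exp (-θ ^ 2 / 2)) - 2)
      ≤ (ω * stdGaussianTail (ω - θ) - stdGaussianPDF (ω - θ))
        + (ω * stdGaussianTail (ω + θ) - stdGaussianPDF (ω + θ)) := by
  wlog hθ : 0 ≤ θ generalizing θ
  · have := this (-θ) (by linarith)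
    rw [neg_sq, sub_neg_eq_add, ← sub_eq_add_neg] at this
    linarith
  set h : ℝ → ℝ := fun a => ω * stdGaussianTail a - stdGaussianPDF a
  have hf : ∀ t, HasDerivAt (fun t => h (ω - t) + h (ω + t))
      ((stdGaussianPDF (ω - t) + stdGaussianPDF (ω + t)) * t) t := fun t =>
    (((hasDerivAt_mul_stdGaussianTail_sub ω (ω - t)).comp t ((hasDerivAt_id t).const_sub ω)).add
      ((hasDerivAt_mul_stdGaussianTail_sub ω (ω + t)).comp t ((hasDerivAt_id t).const_add ω))
      ).congr_deriv (by ring)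
  have hg : ∀ t, HasDerivAt
      (fun t => stdGaussianPDF ω * ω ^ 2 * (1 - (t ^ 2 / 2 + 1) * exp (-t ^ 2 / 2)))
      (stdGaussianPDF ω * (ω ^ 2 * t ^ 2 / 2 * exp (-t ^ 2 / 2)) * t) t := fun t =>
    ((hasDerivAt_one_sub_mul_exp_neg_sq t).const_mul _).congr_deriv (by ring)
  have hgrowth := sub_le_sub_of_hasDerivAt_le hθ hf hg fun t ht =>
    mul_le_mul_of_nonneg_right
      (stdGaussianPDF_mul_le_stdGaussianPDF_sub_add (mul_nonneg hω ht.1.le)) ht.1.le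
  have hstart : 0 ≤ ω * stdGaussianTail ω :=
    mul_nonneg hω (setIntegral_nonneg measurableSet_Ioi fun x _ => (stdGaussianPDF_pos x).le)
  norm_num [h] at hgrowth
  linarith

/-- Lower bound on `𝔼[(ω - G sign(θ+G)) 𝟙(|θ+G| > ω)]` for `G ∼ N(0,1)`. -/
theorem stmt11 (ω θ : ℝ) (hω : 0 ≤ ω) :
    (1 / Real.sqrt (2 * Real.pi)) * Real.exp (-ω ^ 2 / 2) *
        (ω ^ 2 * (1 - (θ ^ 2 / 2 + 1) * Real.exp (-θ ^ 2 / 2)) - 2)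
      ≤ ∫ x in {x : ℝ | ω < |θ + x|}, (ω - x * Real.sign (θ + x)) ∂(gaussianReal 0 1) := by
  rw [one_div, setIntegral_lt_abs_add_eq hω]
  exact stdGaussianPDF_mul_le_tail_sum hω θ
end

section
/- Let $G\sim\mathcal{N}(0,1)$ and $\tau\ge 3$. If $\varepsilon\ge\tau$, then $\big|\mathbb{E}[G(\varepsilon+G)\,\mathbf{1}(|\varepsilon+G|<\tau)]\big| \le \tau$ and $\mathbb{E}[\min\{(\varepsilon+G)^2,\tau^2\}] > \tau^2/2$; consequently $\big|\mathbb{E}[G(\varepsilon+G)\mathbf{1}(|\varepsilon+G|<\tau)]\big| \le \tfrac{2}{\tau}\,\mathbb{E}[\min\{(\varepsilon+G)^2,\tau^2\}] \le \tfrac{2}{3}\,\mathbb{E}[\min\{(\varepsilon+G)^2,\tau^2\}]$. -/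
/-!
For `x > 0` the shift `ε ≥ τ` saturates the truncation, so `min ((ε + x)², τ²) = τ²` on a half-line
of Gaussian mass `1/2`, and the truncated second moment exceeds `τ²/2` strictly because the
integrand is positive on `(-ε, 0)`. On the truncation window `|x (ε + x)| ≤ τ |x| ≤ τ (1 + x²)/2`,
so the correlation is at most `τ`, which is `(2/τ) · τ²/2`.
-/

open MeasureTheory ProbabilityTheory Real Set

lemma measureReal_Ioi_zero_of_map_neg_eq {μ : Measure ℝ} [IsProbabilityMeasure μ]
    [NullSingletonClass μ] (h : μ.map (fun x ↦ -x) = μ) : μ.real (Ioi 0) = 1 / 2 := by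
  have hsymm : μ.real (Iic 0) = μ.real (Ioi 0) := by
    calc μ.real (Iic 0) = μ.real (Iio 0) := measureReal_congr Iio_ae_eq_Iic.symm
      _ = (μ.map (fun x ↦ -x)).real (Iio 0) := by rw [h]
      _ = μ.real (Ioi 0) := by
        rw [map_measureReal_apply measurable_neg measurableSet_Iio, neg_preimage, neg_Iio, neg_zero]
  have htotal := probReal_add_probReal_compl (μ := μ) (measurableSet_Iic (a := (0 : ℝ)))
  rw [compl_Iic, hsymm] at htotal
  linarith

lemma gaussianReal_real_Ioi_zero {v : NNReal} (hv : v ≠ 0) :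
    (gaussianReal 0 v).real (Ioi 0) = 1 / 2 := by
  have := nullSingletonClass_gaussianReal (μ := 0) hv
  exact measureReal_Ioi_zero_of_map_neg_eq (by rw [gaussianReal_map_neg, neg_zero])

lemma integral_sq_gaussianReal (v : NNReal) : ∫ x, x ^ 2 ∂gaussianReal 0 v = v := by
  rw [← variance_of_integral_eq_zero aemeasurable_id' integral_id_gaussianReal]
  exact variance_fun_id_gaussianReal

lemma abs_setIntegral_mul_add_le {μ : Measure ℝ} [IsProbabilityMeasure μ]
    (hsq : Integrable (fun x ↦ x ^ 2) μ) (hmom : ∫ x, x ^ 2 ∂μ ≤ 1) {τ : ℝ} (hτ : 0 ≤ τ) (ε : ℝ) :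
    |∫ x in {x | |ε + x| < τ}, x * (ε + x) ∂μ| ≤ τ := by
  set S := {x : ℝ | |ε + x| < τ}
  have hS : MeasurableSet S := measurableSet_lt (by fun_prop) measurable_const
  set g : ℝ → ℝ := fun x ↦ τ / 2 * (1 + x ^ 2)
  have hg : Integrable g μ := ((integrable_const 1).add hsq).const_mul _
  have hbound : ∀ x ∈ S, ‖x * (ε + x)‖ ≤ g x := fun x hx ↦ by
    rw [norm_mul, norm_eq_abs, norm_eq_abs]
    calc |x| * |ε + x| ≤ |x| * τ := mul_le_mul_of_nonneg_left (le_of_lt hx) (abs_nonneg x)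
      _ ≤ τ / 2 * (1 + x ^ 2) := by nlinarith [mul_nonneg hτ (sq_nonneg (|x| - 1)), sq_abs x]
  calc |∫ x in S, x * (ε + x) ∂μ|
      ≤ ∫ x in S, g x ∂μ :=
        norm_integral_le_of_norm_le hg.restrict (ae_restrict_of_forall_mem hS hbound)
    _ ≤ ∫ x, g x ∂μ := setIntegral_le_integral hg (ae_of_all _ fun x ↦ by positivity)
    _ = τ / 2 * (1 + ∫ x, x ^ 2 ∂μ) := by
      rw [integral_const_mul, integral_add (integrable_const 1) hsq, integral_const,
        probReal_univ, smul_eq_mul, mul_one]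
    _ ≤ τ := by nlinarith

lemma half_sq_lt_integral_min_sq_gaussianReal {v : NNReal} (hv : v ≠ 0) {τ ε : ℝ} (hτ : 0 < τ)
    (hε : τ ≤ ε) : τ ^ 2 / 2 < ∫ x, min ((ε + x) ^ 2) (τ ^ 2) ∂gaussianReal 0 v := by
  set m : ℝ → ℝ := fun x ↦ min ((ε + x) ^ 2) (τ ^ 2)
  have hm : Integrable m (gaussianReal 0 v) := by
    refine (integrable_const (τ ^ 2)).mono' (by fun_prop) (ae_of_all _ fun x ↦ ?_)
    rw [norm_of_nonneg (by positivity)]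
    exact min_le_right _ _
  have hright : ∫ x in Ioi 0, m x ∂gaussianReal 0 v = τ ^ 2 / 2 := by
    rw [setIntegral_congr_fun measurableSet_Ioi (g := fun _ ↦ τ ^ 2) fun x hx ↦
        min_eq_right (pow_le_pow_left₀ hτ.le (by linarith [mem_Ioi.mp hx]) 2),
      setIntegral_const, gaussianReal_real_Ioi_zero hv, smul_eq_mul]
    ring
  have hleft : 0 < ∫ x in (Ioi 0)ᶜ, m x ∂gaussianReal 0 v := by
    rw [setIntegral_pos_iff_support_of_nonneg_ae (ae_of_all _ fun x ↦ by positivity)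
      hm.integrableOn]
    have hsub : Ioo (-ε) 0 ⊆ Function.support m ∩ (Ioi 0)ᶜ := fun x hx ↦
      ⟨(lt_min (by nlinarith [hx.1]) (by positivity)).ne', not_lt.mpr hx.2.le⟩
    refine (pos_iff_ne_zero.mpr fun h0 ↦ ?_).trans_le (measure_mono hsub)
    have := gaussianReal_absolutelyContinuous' 0 hv h0
    rw [volume_Ioo] at this
    simp only [sub_neg_eq_add, zero_add, ENNReal.ofReal_eq_zero] at this
    linarith
  rw [← integral_add_compl measurableSet_Ioi hm, hright]
  linarith

/-- Key contraction estimate for the robust-regression state evolution: for `G ∼ N(0,1)`,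
`τ ≥ 3` and a shift `ε ≥ τ`, the truncated correlation is dominated by a strict fraction
of the truncated second moment. -/
theorem stmt12 (τ ε : ℝ) (hτ : 3 ≤ τ) (hε : τ ≤ ε) :
    |∫ x in {x : ℝ | |ε + x| < τ}, x * (ε + x) ∂(gaussianReal 0 1)| ≤ τ ∧
    τ ^ 2 / 2 < ∫ x, min ((ε + x) ^ 2) (τ ^ 2) ∂(gaussianReal 0 1) ∧
    |∫ x in {x : ℝ | |ε + x| < τ}, x * (ε + x) ∂(gaussianReal 0 1)|
      ≤ (2 / τ) * ∫ x, min ((ε + x) ^ 2) (τ ^ 2) ∂(gaussianReal 0 1) ∧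
    |∫ x in {x : ℝ | |ε + x| < τ}, x * (ε + x) ∂(gaussianReal 0 1)|
      ≤ (2 / 3) * ∫ x, min ((ε + x) ^ 2) (τ ^ 2) ∂(gaussianReal 0 1) := by
  have hτ0 : 0 < τ := by linarith
  have hcorr := abs_setIntegral_mul_add_le (μ := gaussianReal 0 1)
    (memLp_id_gaussianReal 2).integrable_sq (by rw [integral_sq_gaussianReal]; simp) hτ0.le ε
  have hmom := half_sq_lt_integral_min_sq_gaussianReal one_ne_zero hτ0 hε
  set M := ∫ x, min ((ε + x) ^ 2) (τ ^ 2) ∂(gaussianReal 0 1)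
  have hfrac : τ ≤ 2 / τ * M := by
    rw [div_mul_eq_mul_div, le_div_iff₀ hτ0]
    nlinarith
  have hM : 0 ≤ M := by linarith [sq_nonneg τ]
  refine ⟨hcorr, hmom, hcorr.trans hfrac, hcorr.trans (hfrac.trans ?_)⟩
  gcongr
end
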